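/- Let s be a primitive string of length n over Σ with a context adaptive ordering, let c ∈ Σ, and let y be a string with |y| < n. Then occ_s(c·y) = #{t ∈ Rng(y) : L[t] = c}, i.e., the number of rotations of s with prefix c·y equals the number of occurrences of the symbol c in the portion of L = BWT_*(s) corresponding to the rows prefixed by y. -/

import Mathlib

open scoped Classical

variable {A : Type*}

/-- Longest common prefix of two lists. -/
def lcp [DecidableEq A] : List A → List A → List A
  | a :: as, b :: bs => if a = b then a :: lcp as bs else []
  | _, _ => []

/-- A string is primitive if its cyclic rotations are pairwise distinct. -/
def Primitive (s : List A) : Prop :=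
  ∀ i j, i < s.length → j < s.length → s.rotate i = s.rotate j → i = j

/-- The context-adaptive comparison relation on rotations. -/
def Prec [DecidableEq A] (π : List A → A → A → Prop) (u v : List A) : Prop :=
  ∃ a b, u[(lcp u v).length]? = some a ∧ v[(lcp u v).length]? = some b ∧
    π (lcp u v) a b

/-- `occ s w` is the number of cyclic rotations of `s` having `w` as a prefix. -/
noncomputable def occ [DecidableEq A] (s w : List A) : ℕ :=
  ((Finset.range s.length).filter (fun i => w <+: s.rotate i)).card

/-- `rank π s i` is the row index of the rotation `s.rotate i` in the sorted
rotation matrix `M_*(s)`, i.e. the number of rotations that `≺`-precede it. -/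
noncomputable def rank [DecidableEq A] (π : List A → A → A → Prop)
    (s : List A) (i : ℕ) : ℕ :=
  ((Finset.range s.length).filter
    (fun j => Prec π (s.rotate j) (s.rotate i))).card

/-!
Rotating a rotation `u` of `s` by one step moves its first symbol to the end, so (for `|y| < n`)
`c :: y` is a prefix of `u` exactly when `y` is a prefix of `u.rotate 1` and `u.rotate 1` ends
in `c`. Shifting indices by one therefore turns `occ s (c :: y)` into the number of rotations
with prefix `y` and last symbol `c`. Since `≺` is a strict total order on rotations of equal
length and the rotations of a primitive string are pairwise distinct, `rank` is injective, so
these rotations are in bijection with the rows of `Rng(y)` on which `L` reads `c`.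
-/

namespace List

variable [DecidableEq A]

lemma lcp_self (u : List A) : lcp u u = u := by
  induction u with
  | nil => rfl
  | cons a as ih => simp [lcp, ih]

lemma lcp_comm (u v : List A) : lcp u v = lcp v u := by
  induction u generalizing v with
  | nil => cases v <;> rfl
  | cons a as ih =>
    cases v with
    | nil => rfl
    | cons b bs =>
      by_cases h : a = b
      · subst h; simp [lcp, ih]
      · simp [lcp, h, Ne.symm h]

lemma lcp_prefix_left (u v : List A) : lcp u v <+: u := by
  induction u generalizing v with
  | nil => cases v <;> simp [lcp]
  | cons a as ih =>
    cases v with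
    | nil => simp [lcp]
    | cons b bs =>
      by_cases h : a = b
      · subst h; simpa [lcp] using ih bs
      · simp [lcp, h]

lemma lcp_prefix_right (u v : List A) : lcp u v <+: v :=
  lcp_comm u v ▸ lcp_prefix_left v u

lemma exists_getElem?_lcp_ne {u v : List A} (hne : u ≠ v) (hlen : u.length = v.length) :
    ∃ a b, a ≠ b ∧ u[(lcp u v).length]? = some a ∧ v[(lcp u v).length]? = some b := by
  induction u generalizing v with
  | nil =>
    cases v with
    | nil => exact absurd rfl hne
    | cons b bs => simp at hlen
  | cons a as ih =>
    cases v with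
    | nil => simp at hlen
    | cons b bs =>
      by_cases h : a = b
      · subst h
        obtain ⟨x, z, hxz, hx, hz⟩ := ih (by simpa using hne) (by simpa using hlen)
        exact ⟨x, z, hxz, by simpa [lcp] using hx, by simpa [lcp] using hz⟩
      · exact ⟨a, b, h, by simp [lcp, h], by simp [lcp, h]⟩

lemma lcp_eq_of_getElem?_ne {x u v : List A} {a b : A} (hu : x <+: u) (hv : x <+: v)
    (ha : u[x.length]? = some a) (hb : v[x.length]? = some b) (hab : a ≠ b) :
    lcp u v = x := by
  induction x generalizing u v with
  | nil =>
    cases u with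
    | nil => simp at ha
    | cons a' u' =>
      cases v with
      | nil => simp at hb
      | cons b' v' =>
        simp only [length_nil, getElem?_cons_zero, Option.some.injEq] at ha hb
        subst ha hb
        simp [lcp, hab]
  | cons d x' ih =>
    obtain ⟨u', rfl⟩ := hu
    obtain ⟨v', rfl⟩ := hv
    simp only [cons_append, lcp, ↓reduceIte, cons.injEq, true_and]
    exact ih (prefix_append _ _) (prefix_append _ _) (by simpa using ha) (by simpa using hb)

omit [DecidableEq A] in
lemma getElem?_eq_of_prefix {x l : List A} (h : x <+: l) {i : ℕ} (hi : i < x.length) :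
    l[i]? = x[i]? := by
  obtain ⟨t, rfl⟩ := h
  exact getElem?_append_left hi

omit [DecidableEq A] in
lemma cons_prefix_iff_prefix_rotate_one {c : A} {y u : List A} (hu : y.length < u.length) :
    c :: y <+: u ↔ y <+: u.rotate 1 ∧ (u.rotate 1).getLast? = some c := by
  cases u with
  | nil => simp at hu
  | cons d rest =>
    rw [rotate_cons_succ, rotate_zero, cons_prefix_cons, getLast?_concat, Option.some.injEq]
    simp only [length_cons, Nat.lt_succ_iff] at hu
    constructor
    · rintro ⟨rfl, hpre⟩
      exact ⟨hpre.trans (prefix_append _ _), rfl⟩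
    · rintro ⟨hpre, rfl⟩
      refine ⟨rfl, ?_⟩
      rw [prefix_iff_eq_take, take_append_of_le_length hu] at hpre
      exact hpre ▸ take_prefix _ _

end List

open List

section Prec

variable [DecidableEq A] {π : List A → A → A → Prop}

lemma prec_irrefl (u : List A) : ¬ Prec π u u := by
  rintro ⟨a, b, ha, -, -⟩
  simp [lcp_self] at ha

lemma prec_of_prefix [∀ x, Std.Irrefl (π x)] {x u v : List A} {a b : A}
    (hu : x <+: u) (hv : x <+: v) (ha : u[x.length]? = some a) (hb : v[x.length]? = some b)
    (hab : π x a b) : Prec π u v := by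
  have hlcp := lcp_eq_of_getElem?_ne hu hv ha hb (ne_of_irrefl hab)
  exact ⟨a, b, hlcp ▸ ha, hlcp ▸ hb, hlcp ▸ hab⟩

lemma prec_trans [∀ x, IsStrictOrder A (π x)] {u v w : List A}
    (huv : Prec π u v) (hvw : Prec π v w) : Prec π u w := by
  obtain ⟨a, b, ha, hb, hab⟩ := huv
  obtain ⟨b', c, hb', hc, hbc⟩ := hvw
  rcases lt_trichotomy (lcp u v).length (lcp v w).length with h | h | h
  · have hw : w[(lcp u v).length]? = some b := by
      rw [getElem?_eq_of_prefix (lcp_prefix_right v w) h,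
        ← getElem?_eq_of_prefix (lcp_prefix_left v w) h, hb]
    exact prec_of_prefix (lcp_prefix_left u v) ((prefix_of_prefix_length_le
      (lcp_prefix_right u v) (lcp_prefix_left v w) h.le).trans (lcp_prefix_right v w)) ha hw hab
  · have hx : lcp u v = lcp v w := (prefix_of_prefix_length_le
      (lcp_prefix_right u v) (lcp_prefix_left v w) h.le).eq_of_length h
    rw [← hx, hb, Option.some.injEq] at hb'
    subst hb'
    rw [← hx] at hc hbc
    exact prec_of_prefix (lcp_prefix_left u v) (hx ▸ lcp_prefix_right v w) ha hc
      (_root_.trans hab hbc)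
  · have hu : u[(lcp v w).length]? = some b' := by
      rw [getElem?_eq_of_prefix (lcp_prefix_left u v) h,
        ← getElem?_eq_of_prefix (lcp_prefix_right u v) h, hb']
    exact prec_of_prefix ((prefix_of_prefix_length_le (lcp_prefix_left v w)
      (lcp_prefix_right u v) h.le).trans (lcp_prefix_left u v)) (lcp_prefix_right v w) hu hc hbc

lemma prec_or_prec [∀ x, Std.Trichotomous (π x)] {u v : List A}
    (hne : u ≠ v) (hlen : u.length = v.length) : Prec π u v ∨ Prec π v u := by
  obtain ⟨a, b, hab, ha, hb⟩ := exists_getElem?_lcp_ne hne hlen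
  rcases trichotomous_of (π (lcp u v)) a b with h | h | h
  · exact Or.inl ⟨a, b, ha, hb, h⟩
  · exact absurd h hab
  · rw [lcp_comm] at ha hb h
    exact Or.inr ⟨b, a, hb, ha, h⟩

end Prec

section Rank

variable [DecidableEq A] {π : List A → A → A → Prop} {s : List A} {i j : ℕ}

lemma rank_lt_length (hi : i < s.length) : rank π s i < s.length := by
  simpa [rank] using Finset.card_lt_card
    (Finset.filter_ssubset.mpr ⟨i, Finset.mem_range.mpr hi, prec_irrefl _⟩)

lemma rank_lt_rank [∀ x, IsStrictOrder A (π x)] (hi : i < s.length)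
    (h : Prec π (s.rotate i) (s.rotate j)) : rank π s i < rank π s j := by
  refine Finset.card_lt_card ⟨fun k hk => ?_, fun hsub => ?_⟩
  · rw [Finset.mem_filter] at hk ⊢
    exact ⟨hk.1, prec_trans hk.2 h⟩
  · exact prec_irrefl _ (Finset.mem_filter.mp
      (hsub (Finset.mem_filter.mpr ⟨Finset.mem_range.mpr hi, h⟩))).2

lemma rank_injOn [∀ x, IsStrictTotalOrder A (π x)] (hprim : Primitive s) :
    Set.InjOn (rank π s) (Set.Iio s.length) := by
  intro i hi j hj h
  by_contra hne
  rcases prec_or_prec (π := π) (fun he => hne (hprim i j hi hj he)) (by simp) with hp | hp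
  · exact (rank_lt_rank hi hp).ne h
  · exact (rank_lt_rank hj hp).ne h.symm

lemma card_filter_rank [∀ x, IsStrictTotalOrder A (π x)] (hprim : Primitive s)
    (p : List A → Prop) [DecidablePred p] :
    ((Finset.range s.length).filter
      (fun t => ∃ i < s.length, rank π s i = t ∧ p (s.rotate i))).card =
    ((Finset.range s.length).filter (fun i => p (s.rotate i))).card := by
  have himage : (Finset.range s.length).filter
      (fun t => ∃ i < s.length, rank π s i = t ∧ p (s.rotate i)) =
      ((Finset.range s.length).filter (fun i => p (s.rotate i))).image (rank π s) := by
    ext t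
    simp only [Finset.mem_filter, Finset.mem_image, Finset.mem_range]
    constructor
    · rintro ⟨-, i, hi, rfl, hp⟩
      exact ⟨i, ⟨hi, hp⟩, rfl⟩
    · rintro ⟨i, ⟨hi, hp⟩, rfl⟩
      exact ⟨rank_lt_length hi, i, hi, rfl, hp⟩
  rw [himage, Finset.card_image_of_injOn]
  exact (rank_injOn hprim).mono fun i hi => Finset.mem_range.mp (Finset.mem_filter.mp hi).1

end Rank

lemma Finset.card_filter_range_add_one (p : ℕ → Prop) [DecidablePred p] {n : ℕ}
    (hp : p n ↔ p 0) :
    ((range n).filter (fun i => p (i + 1))).card = ((range n).filter p).card := by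
  cases n with
  | zero => rfl
  | succ m =>
    simp only [card_filter]
    rw [sum_range_succ, sum_range_succ' (fun i => if p i then 1 else 0), if_congr hp rfl rfl]

/-- Row `t` of `M_*(s)` is the rotation of rank `t`; it lies in `Rng(y)` if it has prefix `y`,
and `L[t]` is its last symbol. -/
theorem stmt5_general [DecidableEq A]
    (π : List A → A → A → Prop) (hπ : ∀ x, IsStrictTotalOrder A (π x))
    (s : List A) (hprim : Primitive s)
    (c : A) (y : List A) (hy : y.length < s.length) :
    occ s (c :: y) =
    ((Finset.range s.length).filter (fun t => ∃ i < s.length,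
        rank π s i = t ∧ y <+: s.rotate i ∧
        (s.rotate i).getLast? = some c)).card := by
  have hshift : ∀ i, c :: y <+: s.rotate i ↔
      y <+: s.rotate (i + 1) ∧ (s.rotate (i + 1)).getLast? = some c := fun i => by
    rw [← rotate_rotate]
    exact cons_prefix_iff_prefix_rotate_one (by simpa using hy)
  rw [card_filter_rank hprim (fun u => y <+: u ∧ u.getLast? = some c), occ,
    Finset.filter_congr fun i _ => hshift i]
  exact Finset.card_filter_range_add_one
    (fun i => y <+: s.rotate i ∧ (s.rotate i).getLast? = some c)
    (by rw [rotate_length, rotate_zero])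

/-- `occ s (c·y)` equals the number of rows `t` in `Rng(y)` such
that `L[t] = c`, where `L = BWT_*(s)`: row `t` is the rotation with rank `t`,
it belongs to `Rng(y)` if it has `y` as a prefix, and `L[t]` is its last
symbol. -/
theorem stmt5 [Fintype A] [DecidableEq A]
    (π : List A → A → A → Prop) (hπ : ∀ x, IsStrictTotalOrder A (π x))
    (s : List A) (hs : 1 ≤ s.length) (hprim : Primitive s)
    (c : A) (y : List A) (hy : y.length < s.length) :
    occ s (c :: y) =
    ((Finset.range s.length).filter (fun t => ∃ i < s.length,
        rank π s i = t ∧ y <+: s.rotate i ∧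
        (s.rotate i).getLast? = some c)).card :=
  stmt5_general π hπ s hprim c y hy
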